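/- Coincidence statistics after a discriminating measurement match the mixture: under the state-reduction hypotheses (B discriminates ψ₁ against ψ₂), for any A on H₁, ⟨Φ, (A ⊗ B) Φ⟩ = |c₁|² ⟨φ₁, A φ₁⟩. -/

import Mathlib

open scoped InnerProductSpace

/- Positivity of `B` makes `B = S† S`, so `⟪y, B y⟫ = ‖S y‖²` vanishes only when `S y = 0`, and then
`B y = 0`. Hence `⟪ψ₂, B ψ₂⟫ = 0` kills the cross terms `⟪ψ₁, B ψ₂⟫` and `⟪ψ₂, B ψ₁⟫` of
`⟪Φ, (A ⊗ B) Φ⟫`, and of the two diagonal terms only `|c₁|² ⟪φ₁, A φ₁⟫ ⟪ψ₁, B ψ₁⟫` survives. -/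

theorem ContinuousLinearMap.IsPositive.apply_eq_zero_of_inner_self_eq_zero
    {H : Type*} [NormedAddCommGroup H] [InnerProductSpace ℂ H] [CompleteSpace H]
    {T : H →L[ℂ] H} (hT : T.IsPositive) {y : H} (hy : ⟪y, T y⟫_ℂ = 0) : T y = 0 := by
  obtain ⟨S, rfl⟩ := CStarAlgebra.nonneg_iff_eq_star_mul_self.mp
    ((ContinuousLinearMap.nonneg_iff_isPositive T).mpr hT)
  have hSy : S y = 0 := by
    rwa [mul_apply_eq_comp, ContinuousLinearMap.star_eq_adjoint,
      ContinuousLinearMap.adjoint_inner_right, inner_self_eq_zero] at hy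
  rw [mul_apply_eq_comp, hSy, map_zero]

-- `TAB` stands for `A ⊗ B`, known only through its matrix elements on elementary tensors `tp x y`.
theorem stmt13_general {H₁ H₂ K : Type*}
    [NormedAddCommGroup H₁] [InnerProductSpace ℂ H₁]
    [NormedAddCommGroup H₂] [InnerProductSpace ℂ H₂] [CompleteSpace H₂]
    [NormedAddCommGroup K] [InnerProductSpace ℂ K]
    (φ₁ φ₂ : H₁)
    (ψ₁ ψ₂ : H₂)
    (c₁ c₂ : ℂ)
    (B : H₂ →L[ℂ] H₂) (hB : B.IsPositive)
    (hBψ₁ : ⟪ψ₁, B ψ₁⟫_ℂ = 1) (hBψ₂ : ⟪ψ₂, B ψ₂⟫_ℂ = 0)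
    (tp : H₁ → H₂ → K)
    (Φ : K) (hΦ : Φ = c₁ • tp φ₁ ψ₁ + c₂ • tp φ₂ ψ₂) :
    ∀ (A : H₁ →L[ℂ] H₁) (TAB : K →L[ℂ] K),
      (∀ (x x' : H₁) (y y' : H₂),
        ⟪tp x y, TAB (tp x' y')⟫_ℂ = ⟪x, A x'⟫_ℂ * ⟪y, B y'⟫_ℂ) →
      ⟪Φ, TAB Φ⟫_ℂ = (‖c₁‖ ^ 2 : ℂ) * ⟪φ₁, A φ₁⟫_ℂ := by
  intro A TAB hTAB
  have hBψ₂_zero : B ψ₂ = 0 := hB.apply_eq_zero_of_inner_self_eq_zero hBψ₂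
  have hB₁₂ : ⟪ψ₁, B ψ₂⟫_ℂ = 0 := by rw [hBψ₂_zero, inner_zero_right]
  have hB₂₁ : ⟪ψ₂, B ψ₁⟫_ℂ = 0 := by
    rw [← hB.inner_left_eq_inner_right, hBψ₂_zero, inner_zero_left]
  subst hΦ
  simp only [map_add, map_smul, inner_add_left, inner_add_right, inner_smul_left,
    inner_smul_right, hTAB, hBψ₁, hBψ₂, hB₁₂, hB₂₁]
  rw [← Complex.conj_mul']
  ring

/-- Eq. (81) of the paper in the two-channel pure-state model: coincidence
statistics after a discriminating measurement match those of the mixture.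
`TAB` represents `A ⊗ B` on the Hilbert tensor product `K`, characterized by its
matrix elements on elementary tensors `tp x y`. -/
theorem stmt13 {H₁ H₂ K : Type*}
    [NormedAddCommGroup H₁] [InnerProductSpace ℂ H₁] [CompleteSpace H₁]
    [NormedAddCommGroup H₂] [InnerProductSpace ℂ H₂] [CompleteSpace H₂]
    [NormedAddCommGroup K] [InnerProductSpace ℂ K] [CompleteSpace K]
    (φ₁ φ₂ : H₁) (hφ₁ : ‖φ₁‖ = 1) (hφ₂ : ‖φ₂‖ = 1) (hφ : ⟪φ₁, φ₂⟫_ℂ = 0)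
    (ψ₁ ψ₂ : H₂) (hψ₁ : ‖ψ₁‖ = 1) (hψ₂ : ‖ψ₂‖ = 1) (hψ : ⟪ψ₁, ψ₂⟫_ℂ = 0)
    (c₁ c₂ : ℂ) (hc : ‖c₁‖ ^ 2 + ‖c₂‖ ^ 2 = 1)
    (B : H₂ →L[ℂ] H₂) (hB : B.IsPositive) (hB1 : (1 - B).IsPositive)
    (hBψ₁ : ⟪ψ₁, B ψ₁⟫_ℂ = 1) (hBψ₂ : ⟪ψ₂, B ψ₂⟫_ℂ = 0)
    (tp : H₁ → H₂ → K)
    (Φ : K) (hΦ : Φ = c₁ • tp φ₁ ψ₁ + c₂ • tp φ₂ ψ₂) :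
    ∀ (A : H₁ →L[ℂ] H₁) (TAB : K →L[ℂ] K),
      (∀ (x x' : H₁) (y y' : H₂),
        ⟪tp x y, TAB (tp x' y')⟫_ℂ = ⟪x, A x'⟫_ℂ * ⟪y, B y'⟫_ℂ) →
      ⟪Φ, TAB Φ⟫_ℂ = (‖c₁‖ ^ 2 : ℂ) * ⟪φ₁, A φ₁⟫_ℂ :=
  stmt13_general φ₁ φ₂ ψ₁ ψ₂ c₁ c₂ B hB hBψ₁ hBψ₂ tp Φ hΦ
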